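/- arXiv:1609.01405 — 3 statements merged into one kernel-verified Lean document; each statement's English description precedes it below -/
import Mathlib

section
/- Let L be an n×n real matrix such that all off-diagonal entries of L are nonnegative, every column sum of L is nonpositive, and for every index ℓ there exists a finite sequence of indices ℓ = ℓ_0, ℓ_1, …, ℓ_k such that L_{ℓ_{m+1} ℓ_m} > 0 for all 0 ≤ m < k and the column sum of L at ℓ_k is strictly negative (i.e. ∑_h L_{h ℓ_k} < 0). Then every eigenvalue of L (viewed as a complex matrix) has strictly negative real part; in particular, L is invertible. -/
/-!
Let `v` be a left eigenvector of `L` for an eigenvalue `μ` with `0 ≤ re μ`, and let `|v i|` be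
maximal. Gershgorin's estimate on the `i`-th coordinate of `v L = μ v` gives
`re μ |v i| ≤ ∑ j, L j i |v j| ≤ (∑ j, L j i) |v i| ≤ 0`, so equality holds throughout: the
column sum at `i` vanishes and `|v|` is again maximal at every `j` with `L j i > 0`. Along the
chain starting at `i`, maximality is passed on up to an index with negative column sum.
-/

open Matrix

section
variable {ι : Type*} [Fintype ι] {L : Matrix ι ι ℝ}

lemma exists_vecMul_eq_smul_of_mem_spectrum {K : Type*} [Field K] [DecidableEq ι]
    {M : Matrix ι ι K} {μ : K} (hμ : μ ∈ spectrum K M) : ∃ v ≠ 0, v ᵥ* M = μ • v := by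
  rw [spectrum.mem_iff, isUnit_iff_isUnit_det, isUnit_iff_ne_zero, not_not,
    ← exists_vecMul_eq_zero_iff] at hμ
  obtain ⟨v, hv0, hv⟩ := hμ
  refine ⟨v, hv0, ?_⟩
  rwa [Algebra.algebraMap_eq_smul_one, vecMul_sub, vecMul_smul, vecMul_one, sub_eq_zero,
    eq_comm] at hv

lemma re_mul_norm_le_sum_mul_norm {v : ι → ℂ} {μ : ℂ} {i : ι}
    (hL : ∀ j, j ≠ i → 0 ≤ L j i) (hv : ∑ j, v j * L j i = μ * v i) :
    μ.re * ‖v i‖ ≤ ∑ j, L j i * ‖v j‖ := by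
  classical
  have hsplit : (μ - L i i) * v i = ∑ j ∈ Finset.univ.erase i, v j * L j i := by
    rw [Finset.sum_erase_eq_sub (Finset.mem_univ i), hv]; ring
  calc μ.re * ‖v i‖ = (μ - L i i).re * ‖v i‖ + L i i * ‖v i‖ := by simp; ring
    _ ≤ ‖(μ - L i i) * v i‖ + L i i * ‖v i‖ := by
        rw [norm_mul]; gcongr; exact Complex.re_le_norm _
    _ ≤ ∑ j ∈ Finset.univ.erase i, L j i * ‖v j‖ + L i i * ‖v i‖ := by
        rw [hsplit]
        gcongr
        refine (norm_sum_le _ _).trans (Finset.sum_le_sum fun j hj => ?_)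
        rw [norm_mul, Complex.norm_real, Real.norm_of_nonneg (hL j (Finset.ne_of_mem_erase hj)),
          mul_comm]
    _ = ∑ j, L j i * ‖v j‖ := Finset.sum_erase_add _ _ (Finset.mem_univ i)

lemma column_sum_mul_eq_zero_and_eq_of_pos_of_forall_le {w : ι → ℝ} {i : ι}
    (hL : ∀ j, j ≠ i → 0 ≤ L j i) (hcol : ∑ j, L j i ≤ 0) (hw : 0 ≤ w i)
    (hmax : ∀ j, w j ≤ w i) (h : 0 ≤ ∑ j, L j i * w j) :
    (∑ j, L j i) * w i = 0 ∧ ∀ j, 0 < L j i → w j = w i := by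
  have hdefect : ∀ j, 0 ≤ L j i * (w i - w j) := by
    intro j
    rcases eq_or_ne j i with rfl | hj
    · simp
    · exact mul_nonneg (hL j hj) (sub_nonneg.2 (hmax j))
  have hsum : ∑ j, L j i * w j = (∑ j, L j i) * w i - ∑ j, L j i * (w i - w j) := by
    simp only [Finset.sum_mul, ← Finset.sum_sub_distrib]
    exact Finset.sum_congr rfl fun j _ => by ring
  have hcolw : (∑ j, L j i) * w i ≤ 0 := mul_nonpos_of_nonpos_of_nonneg hcol hw
  have hdefect_sum : 0 ≤ ∑ j, L j i * (w i - w j) := Finset.sum_nonneg fun j _ => hdefect j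
  have hzero : ∑ j, L j i * (w i - w j) = 0 := by linarith
  refine ⟨by linarith, fun j hj => ?_⟩
  have := (Finset.sum_eq_zero_iff_of_nonneg fun j _ => hdefect j).1 hzero j (Finset.mem_univ j)
  have := (mul_eq_zero.1 this).resolve_left hj.ne'
  linarith

lemma column_sum_eq_zero_and_norm_eq_of_forall_norm_le {v : ι → ℂ} {μ : ℂ} {i : ι}
    (hL : ∀ j, j ≠ i → 0 ≤ L j i) (hcol : ∑ j, L j i ≤ 0)
    (hv : v ᵥ* L.map Complex.ofReal = μ • v) (hre : 0 ≤ μ.re) (hvi : v i ≠ 0)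
    (hmax : ∀ j, ‖v j‖ ≤ ‖v i‖) :
    ∑ j, L j i = 0 ∧ ∀ j, 0 < L j i → ‖v j‖ = ‖v i‖ := by
  have hrow : ∑ j, v j * L j i = μ * v i := by
    simpa [vecMul, dotProduct] using congrFun hv i
  have hest := re_mul_norm_le_sum_mul_norm hL hrow
  obtain ⟨hzero, hnorm⟩ :=
    column_sum_mul_eq_zero_and_eq_of_pos_of_forall_le (w := fun j => ‖v j‖) hL hcol
      (norm_nonneg _) hmax ((mul_nonneg hre (norm_nonneg _)).trans hest)
  exact ⟨(mul_eq_zero.1 hzero).resolve_right (norm_ne_zero_iff.2 hvi), hnorm⟩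

theorem re_neg_of_mem_spectrum_of_forall_chain [DecidableEq ι]
    (hMetzler : ∀ i j, i ≠ j → 0 ≤ L i j)
    (hcol : ∀ j, ∑ i, L i j ≤ 0)
    (hchain : ∀ ℓ : ι, ∃ (k : ℕ) (c : Fin (k + 1) → ι),
      c 0 = ℓ ∧ (∀ m : Fin k, 0 < L (c m.succ) (c m.castSucc)) ∧
      ∑ h, L h (c (Fin.last k)) < 0)
    {μ : ℂ} (hμ : μ ∈ spectrum ℂ (L.map Complex.ofReal)) : μ.re < 0 := by
  by_contra! hre
  obtain ⟨v, hv0, hv⟩ := exists_vecMul_eq_smul_of_mem_spectrum hμ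
  obtain ⟨i₀, hi₀⟩ := Function.ne_iff.1 hv0
  obtain ⟨i, -, hi⟩ := Finset.exists_max_image Finset.univ (fun j => ‖v j‖)
    ⟨i₀, Finset.mem_univ _⟩
  let IsMaxNorm (j : ι) : Prop := ∀ h, ‖v h‖ ≤ ‖v j‖
  have hmaximal : ∀ j, IsMaxNorm j →
      ∑ h, L h j = 0 ∧ ∀ h, 0 < L h j → IsMaxNorm h := by
    intro j hj
    have hvj : v j ≠ 0 := norm_ne_zero_iff.1 ((norm_pos_iff.2 hi₀).trans_le (hj i₀)).ne'
    obtain ⟨hsum, hnorm⟩ := column_sum_eq_zero_and_norm_eq_of_forall_norm_le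
      (fun h hh => hMetzler h j hh) (hcol j) hv hre hvj hj
    exact ⟨hsum, fun h hh l => (hnorm h hh).symm ▸ hj l⟩
  obtain ⟨k, c, hc0, hstep, hlast⟩ := hchain i
  have hc : ∀ m, IsMaxNorm (c m) := by
    refine Fin.induction (hc0 ▸ fun h => hi h (Finset.mem_univ h)) fun m hm => ?_
    exact (hmaximal _ hm).2 _ (hstep m)
  exact hlast.ne (hmaximal _ (hc (Fin.last k))).1

end

/-- If all off-diagonal entries of `L` are nonnegative, every column sum
of `L` is nonpositive, and from every index `ℓ` there is a chain of indices with positive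
entries of `L` leading to an index whose column sum is strictly negative, then every
eigenvalue of `L` (as a complex matrix) has strictly negative real part; in particular
`L` is invertible. -/
theorem stmt0 {n : ℕ} (L : Matrix (Fin n) (Fin n) ℝ)
    (hMetzler : ∀ i j, i ≠ j → 0 ≤ L i j)
    (hcol : ∀ j, ∑ i, L i j ≤ 0)
    (hchain : ∀ ℓ : Fin n, ∃ (k : ℕ) (c : Fin (k + 1) → Fin n),
      c 0 = ℓ ∧ (∀ m : Fin k, 0 < L (c m.succ) (c m.castSucc)) ∧
      ∑ h, L h (c (Fin.last k)) < 0) :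
    (∀ μ ∈ spectrum ℂ (L.map (Complex.ofReal : ℝ → ℂ)), μ.re < 0) ∧ IsUnit L := by
  have hspec : ∀ μ ∈ spectrum ℂ (L.map (Complex.ofReal : ℝ → ℂ)), μ.re < 0 :=
    fun μ => re_neg_of_mem_spectrum_of_forall_chain hMetzler hcol hchain
  refine ⟨hspec, ?_⟩
  have hunit : IsUnit (L.map (Complex.ofReal : ℝ → ℂ)) :=
    (spectrum.zero_notMem_iff ℂ).1 fun h => (hspec 0 h).false
  have hdet : (L.map Complex.ofReal).det = Complex.ofRealHom L.det :=
    (Complex.ofRealHom.map_det L).symm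
  rw [isUnit_iff_isUnit_det, hdet, isUnit_map_iff] at hunit
  exact (isUnit_iff_isUnit_det L).2 hunit
end

section
/- Let L be an n×n real Metzler matrix (all off-diagonal entries nonnegative) that is Hurwitz (all complex eigenvalues have strictly negative real part). Let κ ∈ ℝⁿ be a row vector with nonnegative entries and let x ∈ ℝⁿ be a vector with nonnegative entries. Then for all 0 ≤ s ≤ t: 0 ≤ −κ·L⁻¹·exp(tL)·x ≤ −κ·L⁻¹·exp(sL)·x. In particular, taking s = 0, 0 ≤ −κ·L⁻¹·exp(tL)·x ≤ −κ·L⁻¹·x for every t ≥ 0. -/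
/-!
Put `g t = κ ⬝ᵥ L⁻¹ exp (t L) x`. As `d/dt exp (t L) = L exp (t L)`, `g' t = κ ⬝ᵥ exp (t L) x`,
which is nonnegative because `exp (t L)` is entrywise nonnegative for Metzler `L` and `t ≥ 0`;
so `g` is nondecreasing on `[0, ∞)`. Since `L` is Hurwitz, `exp (t L) x → 0`: on a generalized
eigenvector for `μ`, `exp (t L) w` is `e^{t μ}` times a polynomial in `t`, and generalized
eigenvectors span `ℂⁿ`. Hence `g t → 0`, so `g ≤ 0` on `[0, ∞)`.
-/

open Matrix Filter Topology NormedSpace Finset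
open scoped Nat Matrix.Norms.Operator

theorem Complex.tendsto_exp_mul_mul_pow_atTop {μ : ℂ} (hμ : μ.re < 0) (j : ℕ) :
    Tendsto (fun t : ℝ => Complex.exp (t * μ) * (t : ℂ) ^ j) atTop (𝓝 0) := by
  rw [tendsto_zero_iff_norm_tendsto_zero]
  refine (tendsto_rpow_mul_exp_neg_mul_atTop_nhds_zero j (-μ.re) (by linarith)).congr' ?_
  filter_upwards [eventually_ge_atTop 0] with t ht
  rw [norm_mul, Complex.norm_exp, norm_pow, Complex.norm_real, Real.norm_of_nonneg ht,
    Real.rpow_natCast, mul_comm]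
  simp [mul_comm]

namespace Matrix

variable {ι : Type*}

def IsMetzler (A : Matrix ι ι ℝ) : Prop := ∀ i j, i ≠ j → 0 ≤ A i j

theorem IsMetzler.smul {A : Matrix ι ι ℝ} (hA : A.IsMetzler) {t : ℝ} (ht : 0 ≤ t) :
    (t • A).IsMetzler :=
  fun i j hij => mul_nonneg ht (hA i j hij)

variable [Fintype ι] [DecidableEq ι]

theorem exp_apply_nonneg {A : Matrix ι ι ℝ} (hA : ∀ i j, 0 ≤ A i j) (i j : ι) :
    0 ≤ exp A i j := by
  have hsum := Pi.hasSum.1 (Pi.hasSum.1 (exp_series_hasSum_exp' (𝕂 := ℝ) A) i) j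
  exact hsum.nonneg fun k => mul_nonneg (by positivity) (pow_apply_nonneg hA k i j)

theorem IsMetzler.exp_apply_nonneg {A : Matrix ι ι ℝ} (hA : A.IsMetzler) (i j : ι) :
    0 ≤ exp A i j := by
  -- `A + c • 1` is entrywise nonnegative and `exp A = exp (A + c • 1) * exp (-c • 1)`.
  obtain ⟨c, hc⟩ := (Set.finite_range fun i => -A i i).bddAbove
  have hshift : ∀ i j, 0 ≤ (A + c • 1) i j := by
    intro i j
    by_cases h : i = j
    · subst h
      simpa [add_comm] using neg_le_iff_add_nonneg.mp (hc ⟨i, rfl⟩)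
    · simpa [h] using hA i j h
  have hsplit : A = (A + c • 1) + (-c) • 1 := by
    rw [add_assoc, ← add_smul, add_neg_cancel, zero_smul, add_zero]
  rw [hsplit, exp_add_of_commute _ _ ((Commute.one_right _).smul_right _),
    smul_one_eq_diagonal (-c), exp_diagonal, mul_diagonal]
  exact mul_nonneg (Matrix.exp_apply_nonneg hshift i j)
    (by simp [← Real.exp_eq_exp_ℝ, Real.exp_nonneg])

theorem exp_smul_mulVec_eq_sum_of_pow_mulVec_eq_zero {𝕜 : Type*} [RCLike 𝕜]
    {N : Matrix ι ι 𝕜} {w : ι → 𝕜} {k : ℕ} (hw : N ^ k *ᵥ w = 0) (z : 𝕜) :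
    exp (z • N) *ᵥ w = ∑ j ∈ range k, (z ^ j / j !) • (N ^ j *ᵥ w) := by
  have hterm : ∀ j, ((j ! : 𝕜)⁻¹ • (z • N) ^ j) *ᵥ w = (z ^ j / j !) • (N ^ j *ᵥ w) := by
    intro j
    rw [smul_pow, smul_smul, smul_mulVec, div_eq_inv_mul]
  have hsum := (exp_series_hasSum_exp' (𝕂 := 𝕜) (z • N)).map (mulVec.addMonoidHomLeft w)
    (continuous_id.matrix_mulVec continuous_const)
  refine hsum.unique ?_
  simp only [Function.comp_def, mulVec.addMonoidHomLeft, AddMonoidHom.coe_mk, ZeroHom.coe_mk,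
    hterm]
  refine hasSum_sum_of_ne_finset_zero fun j hj => ?_
  obtain ⟨d, rfl⟩ := Nat.exists_eq_add_of_le (not_lt.1 (by simpa using hj))
  rw [add_comm k d, pow_add N d k, ← mulVec_mulVec, hw, mulVec_zero, smul_zero]

theorem exp_smul_mulVec_eq_of_pow_sub_smul_one_mulVec_eq_zero {M : Matrix ι ι ℂ} {μ : ℂ}
    {w : ι → ℂ} {k : ℕ} (hw : (M - μ • 1) ^ k *ᵥ w = 0) (z : ℂ) :
    exp (z • M) *ᵥ w =
      ∑ j ∈ range k, (Complex.exp (z * μ) * (z ^ j / j !)) • ((M - μ • 1) ^ j *ᵥ w) := by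
  have hsplit : z • M = (z * μ) • 1 + z • (M - μ • 1) := by
    rw [smul_sub, smul_smul, add_sub_cancel]
  have hscalar : exp ((z * μ) • (1 : Matrix ι ι ℂ)) = Complex.exp (z * μ) • 1 := by
    rw [smul_one_eq_diagonal, smul_one_eq_diagonal, exp_diagonal, Pi.exp_def,
      Complex.exp_eq_exp_ℂ]
  rw [hsplit, exp_add_of_commute _ _ ((Commute.one_left _).smul_left _), hscalar, smul_mul,
    one_mul, smul_mulVec, exp_smul_mulVec_eq_sum_of_pow_mulVec_eq_zero hw, smul_sum]
  simp only [smul_smul]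

theorem pow_sub_smul_one_mulVec_eq_zero_of_mem_maxGenEigenspace {M : Matrix ι ι ℂ} {μ : ℂ}
    {w : ι → ℂ} (hw : w ∈ Module.End.maxGenEigenspace (toLin' M) μ) :
    ∃ k, (M - μ • 1) ^ k *ᵥ w = 0 := by
  obtain ⟨k, hk⟩ := (Module.End.mem_maxGenEigenspace _ _ _).1 hw
  refine ⟨k, ?_⟩
  rwa [← toLin'_apply, toLin'_pow, map_sub, map_smul, toLin'_one]

theorem mem_spectrum_of_pow_sub_smul_one_mulVec_eq_zero {K : Type*} [Field K]
    {M : Matrix ι ι K} {μ : K} {w : ι → K} {k : ℕ} (hw : (M - μ • 1) ^ k *ᵥ w = 0)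
    (hw0 : w ≠ 0) : μ ∈ spectrum K M := by
  rw [spectrum.mem_iff, Algebra.algebraMap_eq_smul_one, ← IsUnit.neg_iff, neg_sub]
  intro hunit
  exact hw0 (mulVec_injective_iff_isUnit.2 (hunit.pow k) (by rw [hw, mulVec_zero]))

theorem tendsto_exp_smul_mulVec_of_pow_sub_smul_one_mulVec_eq_zero {M : Matrix ι ι ℂ} {μ : ℂ}
    (hμ : μ.re < 0) {w : ι → ℂ} {k : ℕ} (hk : (M - μ • 1) ^ k *ᵥ w = 0) :
    Tendsto (fun t : ℝ => exp ((t : ℂ) • M) *ᵥ w) atTop (𝓝 0) := by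
  simp only [exp_smul_mulVec_eq_of_pow_sub_smul_one_mulVec_eq_zero hk]
  rw [← sum_const_zero (s := range k)]
  refine tendsto_finsetSum _ fun j _ => ?_
  have h := ((Complex.tendsto_exp_mul_mul_pow_atTop hμ j).mul_const (j ! : ℂ)⁻¹).smul_const
    ((M - μ • 1) ^ j *ᵥ w)
  simpa only [zero_mul, zero_smul, mul_div_assoc, div_eq_mul_inv, mul_assoc] using h

theorem tendsto_exp_smul_mulVec_of_forall_re_neg {M : Matrix ι ι ℂ}
    (hM : ∀ μ ∈ spectrum ℂ M, μ.re < 0) (v : ι → ℂ) :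
    Tendsto (fun t : ℝ => exp ((t : ℂ) • M) *ᵥ v) atTop (𝓝 0) := by
  have hv : v ∈ ⨆ μ, Module.End.maxGenEigenspace (toLin' M) μ := by
    rw [Module.End.iSup_maxGenEigenspace_eq_top]; trivial
  refine Submodule.iSup_induction _
    (motive := fun w => Tendsto (fun t : ℝ => exp ((t : ℂ) • M) *ᵥ w) atTop (𝓝 0)) hv ?_ ?_ ?_
  · intro μ w hw
    obtain ⟨k, hk⟩ := pow_sub_smul_one_mulVec_eq_zero_of_mem_maxGenEigenspace hw
    by_cases hw0 : w = 0
    · simp [hw0]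
    exact tendsto_exp_smul_mulVec_of_pow_sub_smul_one_mulVec_eq_zero
      (hM μ (mem_spectrum_of_pow_sub_smul_one_mulVec_eq_zero hk hw0)) hk
  · simp
  · intro w₁ w₂ h₁ h₂
    simpa [mulVec_add] using h₁.add h₂

theorem map_ofReal_exp (A : Matrix ι ι ℝ) :
    (exp A).map ((↑) : ℝ → ℂ) = exp (A.map ((↑) : ℝ → ℂ)) :=
  map_exp Complex.ofRealHom.mapMatrix (continuous_id.matrix_map Complex.continuous_ofReal) A

theorem tendsto_exp_smul_mulVec_of_forall_re_neg_map_ofReal {L : Matrix ι ι ℝ}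
    (hL : ∀ μ ∈ spectrum ℂ (L.map ((↑) : ℝ → ℂ)), μ.re < 0) (x : ι → ℝ) :
    Tendsto (fun t : ℝ => exp (t • L) *ᵥ x) atTop (𝓝 0) := by
  have hC := tendsto_exp_smul_mulVec_of_forall_re_neg hL (fun i => (x i : ℂ))
  have hre : Continuous fun v : ι → ℂ => fun i => (v i).re :=
    continuous_pi fun i => Complex.continuous_re.comp (continuous_apply i)
  have hcast : ∀ t : ℝ, exp ((t : ℂ) • L.map ((↑) : ℝ → ℂ)) *ᵥ (fun i => (x i : ℂ)) =
      fun i => ((exp (t • L) *ᵥ x) i : ℂ) := by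
    intro t
    have hsmul : (t : ℂ) • L.map ((↑) : ℝ → ℂ) = (t • L).map (↑) := by ext; simp
    rw [hsmul, ← map_ofReal_exp]
    ext i
    exact (RingHom.map_mulVec Complex.ofRealHom _ x i).symm
  convert (hre.tendsto 0).comp hC using 1
  · funext t
    rw [Function.comp_apply, hcast]
    rfl
  · rfl

theorem isUnit_det_of_zero_notMem_spectrum_map_ofReal {L : Matrix ι ι ℝ}
    (hL : (0 : ℂ) ∉ spectrum ℂ (L.map ((↑) : ℝ → ℂ))) : IsUnit L.det := by
  have hdet : (L.map ((↑) : ℝ → ℂ)).det = (L.det : ℂ) :=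
    (RingHom.map_det Complex.ofRealHom L).symm
  rw [spectrum.zero_mem_iff, not_not, isUnit_iff_isUnit_det, hdet] at hL
  exact (isUnit_map_iff Complex.ofRealHom _).1 hL

theorem hasDerivAt_dotProduct_inv_mul_exp_smul_mulVec {L : Matrix ι ι ℝ} (hL : IsUnit L.det)
    (κ x : ι → ℝ) (t : ℝ) :
    HasDerivAt (fun t : ℝ => κ ⬝ᵥ (L⁻¹ * exp (t • L)) *ᵥ x) (κ ⬝ᵥ exp (t • L) *ᵥ x) t := by
  let f : Matrix ι ι ℝ →ₗ[ℝ] ℝ :=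
    { toFun := fun A => κ ⬝ᵥ (L⁻¹ * A) *ᵥ x
      map_add' := fun A B => by simp only [mul_add, add_mulVec, dotProduct_add]
      map_smul' := fun c A => by simp [smul_mulVec, dotProduct_smul] }
  have h := f.toContinuousLinearMap.hasFDerivAt.comp_hasDerivAt t
    (hasDerivAt_exp_smul_const' L t)
  have hval : f.toContinuousLinearMap (L * exp (t • L)) = κ ⬝ᵥ exp (t • L) *ᵥ x := by
    change κ ⬝ᵥ (L⁻¹ * (L * exp (t • L))) *ᵥ x = _
    rw [nonsing_inv_mul_cancel_left _ _ hL]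
  exact hval ▸ h

theorem IsMetzler.monotoneOn_dotProduct_inv_mul_exp_smul_mulVec {L : Matrix ι ι ℝ}
    (hM : L.IsMetzler) (hL : IsUnit L.det) {κ x : ι → ℝ} (hκ : 0 ≤ κ) (hx : 0 ≤ x) :
    MonotoneOn (fun t : ℝ => κ ⬝ᵥ (L⁻¹ * exp (t • L)) *ᵥ x) (Set.Ici 0) := by
  have hderiv := hasDerivAt_dotProduct_inv_mul_exp_smul_mulVec hL κ x
  refine monotoneOn_of_hasDerivWithinAt_nonneg (convex_Ici 0)
    (fun t _ => (hderiv t).continuousAt.continuousWithinAt)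
    (fun t _ => (hderiv t).hasDerivWithinAt)
    fun t ht => dotProduct_nonneg_of_nonneg hκ fun i => dotProduct_nonneg_of_nonneg ?_ hx
  exact fun j => (hM.smul (interior_subset ht)).exp_apply_nonneg i j

theorem tendsto_dotProduct_inv_mul_exp_smul_mulVec {L : Matrix ι ι ℝ}
    (hL : ∀ μ ∈ spectrum ℂ (L.map ((↑) : ℝ → ℂ)), μ.re < 0) (κ x : ι → ℝ) :
    Tendsto (fun t : ℝ => κ ⬝ᵥ (L⁻¹ * exp (t • L)) *ᵥ x) atTop (𝓝 0) := by
  have hcont : Continuous fun v => κ ⬝ᵥ L⁻¹ *ᵥ v :=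
    continuous_const.dotProduct (continuous_const.matrix_mulVec continuous_id)
  simpa [Function.comp_def, mulVec_mulVec] using
    (hcont.tendsto 0).comp (tendsto_exp_smul_mulVec_of_forall_re_neg_map_ofReal hL x)

end Matrix

/-- For a Metzler, Hurwitz matrix `L`, a nonnegative row vector `κ` and a
nonnegative vector `x`, the quantity `-κ ⬝ L⁻¹ ⬝ exp (t • L) ⬝ x` is nonnegative and
nonincreasing in `t ≥ 0`; in particular it is bounded above by `-κ ⬝ L⁻¹ ⬝ x`. -/
theorem stmt6 {n : ℕ} (L : Matrix (Fin n) (Fin n) ℝ)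
    (hMetzler : ∀ i j, i ≠ j → 0 ≤ L i j)
    (hHurwitz : ∀ μ ∈ spectrum ℂ (L.map (Complex.ofReal : ℝ → ℂ)), μ.re < 0)
    (κ : Fin n → ℝ) (hκ : ∀ i, 0 ≤ κ i)
    (x : Fin n → ℝ) (hx : ∀ i, 0 ≤ x i) :
    (∀ s t : ℝ, 0 ≤ s → s ≤ t →
        0 ≤ -(κ ⬝ᵥ (L⁻¹ * NormedSpace.exp (t • L)).mulVec x) ∧
        -(κ ⬝ᵥ (L⁻¹ * NormedSpace.exp (t • L)).mulVec x) ≤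
          -(κ ⬝ᵥ (L⁻¹ * NormedSpace.exp (s • L)).mulVec x)) ∧
    (∀ t : ℝ, 0 ≤ t →
        -(κ ⬝ᵥ (L⁻¹ * NormedSpace.exp (t • L)).mulVec x) ≤ -(κ ⬝ᵥ L⁻¹.mulVec x)) := by
  set g := fun t : ℝ => κ ⬝ᵥ (L⁻¹ * exp (t • L)) *ᵥ x
  have hdet := isUnit_det_of_zero_notMem_spectrum_map_ofReal fun h => (hHurwitz 0 h).false
  have hmono : MonotoneOn g (Set.Ici 0) :=
    IsMetzler.monotoneOn_dotProduct_inv_mul_exp_smul_mulVec hMetzler hdet hκ hx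
  have hnonpos : ∀ t, 0 ≤ t → g t ≤ 0 := fun t ht =>
    ge_of_tendsto (tendsto_dotProduct_inv_mul_exp_smul_mulVec hHurwitz κ x)
      (eventually_ge_atTop t |>.mono fun u hu => hmono ht (ht.trans hu) hu)
  refine ⟨fun s t hs hst => ⟨neg_nonneg.2 (hnonpos t (hs.trans hst)),
    neg_le_neg (hmono hs (hs.trans hst) hst)⟩, fun t ht => ?_⟩
  simpa [g] using neg_le_neg (hmono Set.self_mem_Ici ht ht)
end

section
/- Fix N ≥ 1 and let x : [0,∞) → ℝ be differentiable with x(0) = 2 and x'(t) = −x(t)³ + 6·x(t)² − 11·x(t) + 6·(1 − e^{−N·t}) for all t ≥ 0. Then limsup_{t→∞} x(t) ≤ 1. -/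
/-!
Write `F y = -(y - 1)(y - 2)(y - 3)`. The equation reads `x' = F x - 6 e^{-N t}`, so `x` is a
strict subsolution of `z' = F z`, and `F < 0` on `(1, 2)` with `F 2 = 0`. A strict subsolution
cannot cross upwards a level where `F ≤ 0`, so `x ≤ 2` throughout. If `x` stayed above some
`c > 1` forever, it would be strictly decreasing, hence trapped in a compact interval
`[c, c₁] ⊂ (1, 2)` on which `F` is bounded away from `0`, and would decrease at a linear rate,
which is absurd. So `x` reaches every level `c ∈ (1, 2)` and then stays below it. The level `-1`,
where the right-hand side is at least `18`, bounds `x` from below, so the `limsup` is not a junk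
value.
-/

open Filter Set

section Barrier

variable {x x' : ℝ → ℝ} {a c : ℝ}

lemma le_of_hasDerivAt_neg_at_level (hx : ∀ t ≥ a, HasDerivAt x (x' t) t) (ha : x a ≤ c)
    (hc : ∀ t ≥ a, x t = c → x' t < 0) {t : ℝ} (ht : a ≤ t) : x t ≤ c :=
  image_le_of_deriv_right_lt_deriv_boundary (B := fun _ => c) (B' := 0)
    (fun u hu => (hx u hu.1).continuousAt.continuousWithinAt)
    (fun u hu => (hx u hu.1).hasDerivWithinAt) ha (fun _ => hasDerivAt_const _ _)
    (fun u hu => hc u hu.1) ⟨ht, le_rfl⟩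

lemma ge_of_hasDerivAt_pos_at_level (hx : ∀ t ≥ a, HasDerivAt x (x' t) t) (ha : c ≤ x a)
    (hc : ∀ t ≥ a, x t = c → 0 < x' t) {t : ℝ} (ht : a ≤ t) : c ≤ x t :=
  image_le_of_deriv_right_lt_deriv_boundary' (f := fun _ => c) (f' := 0)
    continuousOn_const (fun _ _ => hasDerivWithinAt_const _ _ _) ha
    (fun u hu => (hx u hu.1).continuousAt.continuousWithinAt)
    (fun u hu => (hx u hu.1).hasDerivWithinAt) (fun u hu h => hc u hu.1 h.symm) ⟨ht, le_rfl⟩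

lemma le_add_mul_of_hasDerivAt_le {C : ℝ} (hx : ∀ t ≥ a, HasDerivAt x (x' t) t)
    (hC : ∀ t ≥ a, x' t ≤ C) {t : ℝ} (ht : a ≤ t) : x t ≤ x a + C * (t - a) :=
  image_le_of_deriv_right_le_deriv_boundary (B := fun u => x a + C * (u - a)) (B' := fun _ => C)
    (fun u hu => (hx u hu.1).continuousAt.continuousWithinAt)
    (fun u hu => (hx u hu.1).hasDerivWithinAt) (by simp) (by fun_prop)
    (fun u _ => by simpa using (((hasDerivAt_id u).sub_const a).const_mul C).const_add (x a)
      |>.hasDerivWithinAt)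
    (fun u hu => hC u hu.1) ⟨ht, le_rfl⟩

end Barrier

section StrictSubsolution

variable {F x x' : ℝ → ℝ} {a p q : ℝ}

lemma exists_le_of_hasDerivAt_lt (hF : ContinuousOn F (Ioo p q))
    (hF_neg : ∀ y ∈ Ioo p q, F y < 0) (hFq : F q ≤ 0)
    (hx : ∀ t ≥ a, HasDerivAt x (x' t) t) (hx' : ∀ t ≥ a, x' t < F (x t)) (ha : x a ≤ q)
    {c : ℝ} (hc : p < c) : ∃ t ≥ a, x t ≤ c := by
  by_contra! habove
  have hle_q (t : ℝ) (ht : a ≤ t) : x t ≤ q :=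
    le_of_hasDerivAt_neg_at_level hx ha (fun t ht h => (h ▸ hx' t ht).trans_le hFq) ht
  have hx'_neg (t : ℝ) (ht : a ≤ t) : x' t < 0 := by
    refine (hx' t ht).trans_le ?_
    rcases (hle_q t ht).lt_or_eq with h | h
    · exact (hF_neg _ ⟨hc.trans (habove t ht), h⟩).le
    · exact h ▸ hFq
  have hanti : StrictAntiOn x (Ici a) := by
    refine strictAntiOn_of_hasDerivWithinAt_neg (f' := x') (convex_Ici a)
      (fun t ht => (hx t ht).continuousAt.continuousWithinAt) (fun t ht => ?_) (fun t ht => ?_)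
    all_goals rw [interior_Ici] at ht
    exacts [(hx t ht.le).hasDerivWithinAt, hx'_neg t ht.le]
  set c₁ := x (a + 1)
  have hc₁ : c₁ < q :=
    (hanti self_mem_Ici (mem_Ici.2 (by linarith)) (by linarith)).trans_le (hle_q a le_rfl)
  have htrap (t : ℝ) (ht : a + 1 ≤ t) : x t ∈ Icc c c₁ :=
    ⟨(habove t (by linarith)).le,
      hanti.antitoneOn (mem_Ici.2 (by linarith)) (mem_Ici.2 (by linarith)) ht⟩
  have hsub : Icc c c₁ ⊆ Ioo p q := Icc_subset_Ioo hc hc₁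
  obtain ⟨y₀, hy₀, hmax⟩ :=
    isCompact_Icc.exists_isMaxOn ⟨_, htrap (a + 1) le_rfl⟩ (hF.mono hsub)
  have hm : F y₀ < 0 := hF_neg y₀ (hsub hy₀)
  have hlin (t : ℝ) (ht : a + 1 ≤ t) : x t ≤ c₁ + F y₀ * (t - (a + 1)) :=
    le_add_mul_of_hasDerivAt_le (fun s hs => hx s (by linarith))
      (fun s hs => ((hx' s (by linarith)).trans_le (hmax (htrap s hs))).le) ht
  set T := a + 1 + (c₁ - c) / -F y₀
  have hT : a + 1 ≤ T :=
    le_add_of_nonneg_right (div_nonneg (by linarith [(htrap _ le_rfl).1]) (by linarith))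
  have hxT : x T ≤ c := by
    have hdrop : F y₀ * (T - (a + 1)) = c - c₁ := by
      simp only [T]
      field_simp [hm.ne]
      ring
    linarith [hlin T hT]
  exact (habove T (by linarith)).not_ge hxT

lemma eventually_le_of_hasDerivAt_lt (hF : ContinuousOn F (Ioo p q))
    (hF_neg : ∀ y ∈ Ioo p q, F y < 0) (hFq : F q ≤ 0)
    (hx : ∀ t ≥ a, HasDerivAt x (x' t) t) (hx' : ∀ t ≥ a, x' t < F (x t)) (ha : x a ≤ q)
    {c : ℝ} (hc : c ∈ Ioo p q) : ∀ᶠ t in atTop, x t ≤ c := by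
  obtain ⟨t₀, ht₀, hxt₀⟩ := exists_le_of_hasDerivAt_lt hF hF_neg hFq hx hx' ha hc.1
  refine eventually_atTop.2 ⟨t₀, fun t ht => le_of_hasDerivAt_neg_at_level
    (fun s hs => hx s (ht₀.trans hs)) hxt₀ (fun s hs h => ?_) ht⟩
  exact ((hx' s (ht₀.trans hs)).trans_eq (congrArg F h)).trans (hF_neg c hc)

lemma limsup_le_of_hasDerivAt_lt (hpq : p < q) (hF : ContinuousOn F (Ioo p q))
    (hF_neg : ∀ y ∈ Ioo p q, F y < 0) (hFq : F q ≤ 0)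
    (hx : ∀ t ≥ a, HasDerivAt x (x' t) t) (hx' : ∀ t ≥ a, x' t < F (x t)) (ha : x a ≤ q)
    (hbdd : IsCoboundedUnder (· ≤ ·) atTop x) : limsup x atTop ≤ p := by
  refine le_of_forall_gt_imp_ge_of_dense fun c hc => ?_
  have hc' : min c ((p + q) / 2) ∈ Ioo p q :=
    ⟨lt_min hc (by linarith), (min_le_right _ _).trans_lt (by linarith)⟩
  exact (limsup_le_of_le hbdd (eventually_le_of_hasDerivAt_lt hF hF_neg hFq hx hx' ha hc')).trans
    (min_le_left _ _)

end StrictSubsolution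

/-- Fix `N ≥ 1` and let `x : ℝ → ℝ` satisfy `x 0 = 2` and
`x' t = -x t ^ 3 + 6 * x t ^ 2 - 11 * x t + 6 * (1 - e^(-N * t))` for all `t ≥ 0`.
Then `limsup_{t → ∞} x t ≤ 1`. -/
theorem stmt15 (N : ℝ) (hN : 1 ≤ N) (x : ℝ → ℝ) (hx0 : x 0 = 2)
    (hx : ∀ t : ℝ, 0 ≤ t →
      HasDerivAt x (-(x t) ^ 3 + 6 * (x t) ^ 2 - 11 * x t + 6 * (1 - Real.exp (-N * t))) t) :
    limsup x atTop ≤ 1 := by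
  have hbelow (t : ℝ) (ht : 0 ≤ t) : -1 ≤ x t := by
    refine ge_of_hasDerivAt_pos_at_level hx (by rw [hx0]; norm_num) (fun s hs h => ?_) ht
    have hexp_le : Real.exp (-N * s) ≤ 1 := Real.exp_le_one_iff.2 (by nlinarith)
    rw [h]
    linarith
  refine limsup_le_of_hasDerivAt_lt (F := fun y => -(y - 1) * (y - 2) * (y - 3)) one_lt_two
    (by fun_prop) (fun y hy => ?_) (by norm_num) hx (fun t _ => ?_) hx0.le
    (isCoboundedUnder_le_of_eventually_le atTop (eventually_atTop.2 ⟨0, hbelow⟩))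
  · have h3 : 0 < 3 - y := by linarith [hy.2]
    nlinarith [mul_pos (mul_pos (sub_pos.2 hy.1) (sub_pos.2 hy.2)) h3]
  · linear_combination 6 * Real.exp_pos (-N * t)
end
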